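/- arXiv:cs/0008018 — 3 statements merged into one kernel-verified Lean document; each statement's English description precedes it below -/
import Mathlib

section
/- The substitution φ associated with a context-free grammar G in Greibach normal form is a morphism of right-actions: for every boolean series S over the nonterminal alphabet V and every terminal word u ∈ X*, φ(S ⊙ u) = φ(S) • u, where ⊙ is the grammar-derivation right-action of X* on series over V and • is the left-quotient action of X* on languages over X. -/
/-- Left-quotient (residual) of a language by a word. -/
def lq {A : Type*} (S : Language A) (u : List A) : Language A := {w | u ++ w ∈ S}

/-- Leftmost derivation to a terminal word, for a context-free grammar in Greibach
normal form with productions `P ⊆ V × X × V*` (a production `(v, x, β)` is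
`v → x·β`). `Gen P w u` means the sentential form `w ∈ V*` derives the terminal
word `u ∈ X*`. -/
inductive Gen {V X : Type*} (P : Set (V × X × List V)) : List V → List X → Prop
  | nil : Gen P [] []
  | cons {v : V} {x : X} {β γ : List V} {u : List X} :
      (v, x, β) ∈ P → Gen P (β ++ γ) u → Gen P (v :: γ) (x :: u)

/-- The substitution `φ` associated with the grammar: `φ(S)` is the language over `X`
generated by the grammar from the set of axioms `S ⊆ V*`. -/
def phi {V X : Type*} (P : Set (V × X × List V)) (S : Language V) : Language X :=
  {u | ∃ w ∈ S, Gen P w u}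

/-- The grammar-derivation right-action of a letter `x ∈ X` on a boolean series over
`V`: `(v·γ) ⊙ x = (Σ_{(v,h)∈P} h • x)·γ` and `ε ⊙ x = ∅`. -/
def actLetter {V X : Type*} (P : Set (V × X × List V)) (S : Language V) (x : X) :
    Language V :=
  {w | ∃ (v : V) (γ β : List V), v :: γ ∈ S ∧ (v, x, β) ∈ P ∧ w = β ++ γ}

/-- The right-action of `X*` on boolean series over `V`, extending `actLetter`. -/
def act {V X : Type*} (P : Set (V × X × List V)) (S : Language V) (u : List X) :
    Language V :=
  u.foldl (actLetter P) S

lemma phi_actLetter {V X : Type*} (P : Set (V × X × List V)) (S : Language V) (x : X) :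
    phi P (actLetter P S x) = lq (phi P S) [x] := by
  ext w
  constructor
  · rintro ⟨w', ⟨v, γ, β, hvγ, hP, rfl⟩, hgen⟩
    exact ⟨v :: γ, hvγ, Gen.cons hP hgen⟩
  · rintro ⟨s, hs, hgen⟩
    cases hgen with
    | cons hP hgen' => exact ⟨_, ⟨_, _, _, hs, hP, rfl⟩, hgen'⟩

/-- `φ` is a morphism of right-actions: for every boolean series `S` over `V` and every
terminal word `u ∈ X*`, `φ(S ⊙ u) = φ(S) • u`. -/
theorem phi_act_eq_lq_phi {V X : Type*} (P : Set (V × X × List V))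
    (S : Language V) (u : List X) :
    phi P (act P S u) = lq (phi P S) u := by
  induction u generalizing S with
  | nil => rfl
  | cons x u ih =>
    show phi P (act P (actLetter P S x) u) = _
    rw [ih, phi_actLetter]
    ext w
    exact Iff.rfl
end

section
/- For vectors S, S' in DRB_{1,n}⟨⟨V⟩⟩ the following are equivalent: (i) S ∼ S' (there exists a σ-η-bisimulation containing (S,S')); (ii) there exists a w-η-bisimulation of order ∞ with respect to (S,S'); (iii) for every m ∈ ℕ there exists a w-η-bisimulation of order m with respect to (S,S'). -/
/-- Componentwise left-quotient of a row-vector of series. -/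
def lqVec {V : Type*} {n : ℕ} (S : Fin n → Language V) (u : List V) :
    Fin n → Language V := fun j => lq (S j) u

/-- A row-vector of series is left-deterministic over the structured alphabet
`(V, r)`. -/
def LeftDetVec {V : Type*} (r : V → V → Prop) {n : ℕ} (S : Fin n → Language V) : Prop :=
  (∀ j, S j = 0) ∨
  (∃ j0, S j0 = 1 ∧ ∀ j, j ≠ j0 → S j = 0) ∨
  (∀ j j' w w', w ∈ S j → w' ∈ S j' →
    ∃ (a a' : V) (t t' : List V), w = a :: t ∧ w' = a' :: t' ∧ r a a')

/-- A row-vector is deterministic iff all its componentwise left-quotients are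
left-deterministic. -/
def DetVec {V : Type*} (r : V → V → Prop) {n : ℕ} (S : Fin n → Language V) : Prop :=
  ∀ u : List V, LeftDetVec r (lqVec S u)

/-- A row-vector is rational iff it has finitely many residuals. -/
def RatVec {V : Type*} {n : ℕ} (S : Fin n → Language V) : Prop :=
  {T | ∃ u : List V, T = lqVec S u}.Finite

/-- The norm of a row-vector: the (extended) number of its residuals. -/
noncomputable def normVec {V : Type*} {n : ℕ} (S : Fin n → Language V) : ℕ∞ :=
  {T | ∃ u : List V, T = lqVec S u}.encard

/-- A row-vector is loop-free iff no residual by a nonempty word equals the vector. -/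
def LoopFreeVec {V : Type*} {n : ℕ} (S : Fin n → Language V) : Prop :=
  ∀ v : List V, v ≠ [] → lqVec S v ≠ S

/-- A scalar series is deterministic. -/
def Det {V : Type*} (r : V → V → Prop) (S : Language V) : Prop :=
  ∀ u : List V, LeftDetVec r (lqVec (fun _ : Fin 1 => S) u)

/-- A scalar series is rational. -/
def RatSer {V : Type*} (S : Language V) : Prop := {T | ∃ u : List V, T = lq S u}.Finite

/-- Componentwise right-action on row-vectors. -/
def actVec {V X : Type*} (P : Set (V × X × List V)) {n : ℕ} (S : Fin n → Language V)
    (u : List X) : Fin n → Language V := fun j => act P (S j) u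

/-- The unit row-vector `ε_i^n`. -/
def unitVec {V : Type*} {n : ℕ} (i : Fin n) : Fin n → Language V :=
  fun j => if j = i then 1 else 0

/-- The grammar `P` is strict-deterministic with respect to the equivalence `r`. -/
def StrictDet {V X : Type*} (P : Set (V × X × List V)) (r : V → V → Prop) : Prop :=
  ∀ (x : X) (q : ℕ) (E : Fin q → V), Function.Injective E →
    (∀ k k', r (E k) (E k')) →
    DetVec r (fun k => ({β | (E k, x, β) ∈ P} : Language V))

/-- A strong relational morphism `η ⊆ X* × X*`. -/
def IsSRM {X : Type*} (η : List X → List X → Prop) : Prop :=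
  η [] [] ∧
  (∀ u u' v v', η u u' → η v v' → η (u ++ v) (u' ++ v')) ∧
  (∀ u : List X, ∃ u', η u u') ∧
  (∀ u' : List X, ∃ u, η u u') ∧
  (∀ u u', η u u' → ∃ l : List (X × X),
    u = l.map Prod.fst ∧ u' = l.map Prod.snd ∧ ∀ p ∈ l, η [p.1] [p.2])

/-- `R` is a `σ`-`η`-bisimulation on row-vectors of dimension `n`. -/
def IsSigmaBisim {V X : Type*} (P : Set (V × X × List V))
    (η : List X → List X → Prop) {n : ℕ}
    (R : (Fin n → Language V) → (Fin n → Language V) → Prop) : Prop :=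
  ∀ S S', R S S' →
    (∀ x : X, ∃ x' : X, η [x] [x'] ∧ R (actVec P S [x]) (actVec P S' [x'])) ∧
    (∀ x : X, ∃ x'' : X, η [x''] [x] ∧ R (actVec P S [x'']) (actVec P S' [x])) ∧
    (∀ i : Fin n, S = unitVec i ↔ S' = unitVec i)

/-- `S ∼ S'`: some `σ`-`η`-bisimulation contains `(S, S')`. -/
def Sim {V X : Type*} (P : Set (V × X × List V)) (η : List X → List X → Prop)
    {n : ℕ} (S S' : Fin n → Language V) : Prop :=
  ∃ R, IsSigmaBisim P η R ∧ R S S'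

/-- Row-vector times matrix of series. -/
def vmul {V : Type*} {m lam : ℕ} (α : Fin m → Language V)
    (M : Fin m → Fin lam → Language V) : Fin lam → Language V :=
  fun j => ∑ k, α k * M k j

/-- `R ⊆ X* × X*` is a w-`η`-bisimulation (of order `∞`) with respect to `(S, S')`. -/
def IsWBisim {V X : Type*} (P : Set (V × X × List V)) (η : List X → List X → Prop)
    {n : ℕ} (S S' : Fin n → Language V) (R : List X → List X → Prop) : Prop :=
  (∀ u u', R u u' → η u u') ∧
  -- totality
  (∀ u : List X, ∃ u', R u u') ∧
  (∀ u' : List X, ∃ u, R u u') ∧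
  -- extension
  (∀ u u', R u u' → ∀ x : X,
    (∃ x' : X, η [x] [x'] ∧ R (u ++ [x]) (u' ++ [x'])) ∧
    (∃ x'' : X, η [x''] [x] ∧ R (u ++ [x'']) (u' ++ [x]))) ∧
  -- coherence
  (∀ u u', R u u' → ∀ i : Fin n,
    actVec P S u = unitVec i ↔ actVec P S' u' = unitVec i) ∧
  -- prefix
  (∀ u u' (x x' : X), R (u ++ [x]) (u' ++ [x']) → R u u')

/-- `R ⊆ X* × X*` is a w-`η`-bisimulation of order `m` with respect to `(S, S')`. -/
def IsWBisimOfOrder {V X : Type*} (P : Set (V × X × List V))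
    (η : List X → List X → Prop) {n : ℕ} (S S' : Fin n → Language V) (m : ℕ)
    (R : List X → List X → Prop) : Prop :=
  (∀ u u', R u u' → η u u') ∧
  -- totality up to length `m`
  (∀ u : List X, u.length ≤ m → ∃ u', R u u') ∧
  (∀ u' : List X, u'.length ≤ m → ∃ u, R u u') ∧
  (∀ u u', R u u' → u.length ≤ m ∧ u'.length ≤ m) ∧
  -- extension for pairs of length `≤ m - 1`
  (∀ u u', R u u' → u.length + 1 ≤ m → u'.length + 1 ≤ m → ∀ x : X,
    (∃ x' : X, η [x] [x'] ∧ R (u ++ [x]) (u' ++ [x'])) ∧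
    (∃ x'' : X, η [x''] [x] ∧ R (u ++ [x'']) (u' ++ [x]))) ∧
  -- coherence
  (∀ u u', R u u' → ∀ i : Fin n,
    actVec P S u = unitVec i ↔ actVec P S' u' = unitVec i) ∧
  -- prefix
  (∀ u u' (x x' : X), R (u ++ [x]) (u' ++ [x']) → R u u')

section AuxBisim

open Filter

variable {V X : Type*}

lemma actVec_append (P : Set (V × X × List V)) {n : ℕ} (S : Fin n → Language V)
    (u v : List X) : actVec P S (u ++ v) = actVec P (actVec P S u) v := by
  funext j
  simp [actVec, act, List.foldl_append]

lemma eta_length {η : List X → List X → Prop} (hη : IsSRM η) {u u' : List X}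
    (h : η u u') : u.length = u'.length := by
  obtain ⟨l, h1, h2, -⟩ := hη.2.2.2.2 u u' h
  simp [h1, h2]

/-- The canonical w-bisimulation generated by a σ-η-bisimulation. -/
inductive WRel (P : Set (V × X × List V)) (η : List X → List X → Prop) {n : ℕ}
    (R₀ : (Fin n → Language V) → (Fin n → Language V) → Prop)
    (S S' : Fin n → Language V) : List X → List X → Prop
  | nil : WRel P η R₀ S S' [] []
  | snoc {u u' : List X} {x x' : X} : WRel P η R₀ S S' u u' → η [x] [x'] →
      R₀ (actVec P S (u ++ [x])) (actVec P S' (u' ++ [x'])) →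
      WRel P η R₀ S S' (u ++ [x]) (u' ++ [x'])

variable {P : Set (V × X × List V)} {η : List X → List X → Prop} {n : ℕ}
  {R₀ : (Fin n → Language V) → (Fin n → Language V) → Prop}
  {S S' : Fin n → Language V}

lemma WRel.r0 (h0 : R₀ S S') {u u' : List X} (h : WRel P η R₀ S S' u u') :
    R₀ (actVec P S u) (actVec P S' u') := by
  cases h with
  | nil => exact h0
  | snoc _ _ h3 => exact h3

lemma WRel.eta (hη : IsSRM η) {u u' : List X} (h : WRel P η R₀ S S' u u') : η u u' := by
  induction h with
  | nil => exact hη.1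
  | snoc _ h2 _ ih => exact hη.2.1 _ _ _ _ ih h2

lemma WRel.prefix_snoc {u u' : List X} {x x' : X}
    (h : WRel P η R₀ S S' (u ++ [x]) (u' ++ [x'])) : WRel P η R₀ S S' u u' := by
  have key : ∀ v v', WRel P η R₀ S S' v v' → v = u ++ [x] → v' = u' ++ [x'] →
      WRel P η R₀ S S' u u' := by
    intro v v' hv
    cases hv with
    | nil => intro h1 _; simp at h1
    | snoc h1 h2 h3 =>
      intro e1 e2
      obtain ⟨rfl, -⟩ := List.append_inj' e1 rfl
      obtain ⟨rfl, -⟩ := List.append_inj' e2 rfl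
      exact h1
  exact key _ _ h rfl rfl

lemma WRel.ext_fwd (hb : IsSigmaBisim P η R₀) (h0 : R₀ S S') {u u' : List X}
    (h : WRel P η R₀ S S' u u') (x : X) :
    ∃ x' : X, η [x] [x'] ∧ WRel P η R₀ S S' (u ++ [x]) (u' ++ [x']) := by
  obtain ⟨x', hx', hr⟩ := (hb _ _ (h.r0 h0)).1 x
  refine ⟨x', hx', h.snoc hx' ?_⟩
  rw [actVec_append, actVec_append]
  exact hr

lemma WRel.ext_bwd (hb : IsSigmaBisim P η R₀) (h0 : R₀ S S') {u u' : List X}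
    (h : WRel P η R₀ S S' u u') (x : X) :
    ∃ x'' : X, η [x''] [x] ∧ WRel P η R₀ S S' (u ++ [x'']) (u' ++ [x]) := by
  obtain ⟨x'', hx'', hr⟩ := (hb _ _ (h.r0 h0)).2.1 x
  refine ⟨x'', hx'', h.snoc hx'' ?_⟩
  rw [actVec_append, actVec_append]
  exact hr

lemma WRel.total (hb : IsSigmaBisim P η R₀) (h0 : R₀ S S') :
    ∀ u : List X, ∃ u', WRel P η R₀ S S' u u' := by
  intro u
  induction u using List.reverseRecOn with
  | nil => exact ⟨[], .nil⟩
  | append_singleton u x ih =>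
    obtain ⟨u', hu'⟩ := ih
    obtain ⟨x', hx', h⟩ := hu'.ext_fwd hb h0 x
    exact ⟨u' ++ [x'], h⟩

lemma WRel.cototal (hb : IsSigmaBisim P η R₀) (h0 : R₀ S S') :
    ∀ u' : List X, ∃ u, WRel P η R₀ S S' u u' := by
  intro u'
  induction u' using List.reverseRecOn with
  | nil => exact ⟨[], .nil⟩
  | append_singleton u' x ih =>
    obtain ⟨u, hu⟩ := ih
    obtain ⟨x'', hx'', h⟩ := hu.ext_bwd hb h0 x
    exact ⟨u ++ [x''], h⟩

lemma sim_to_w (hη : IsSRM η) (h : Sim P η S S') : ∃ R, IsWBisim P η S S' R := by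
  obtain ⟨R₀, hb, h0⟩ := h
  refine ⟨WRel P η R₀ S S', ?_, WRel.total hb h0, WRel.cototal hb h0, ?_, ?_, ?_⟩
  · intro u u' h; exact h.eta hη
  · intro u u' h x; exact ⟨h.ext_fwd hb h0 x, h.ext_bwd hb h0 x⟩
  · intro u u' h i; exact (hb _ _ (h.r0 h0)).2.2 i
  · intro u u' x x' h; exact h.prefix_snoc

lemma w_to_sim (hη : IsSRM η) (h : ∃ R, IsWBisim P η S S' R) : Sim P η S S' := by
  obtain ⟨R, hR1, hR2, hR3, hR4, hR5, hR6⟩ := h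
  refine ⟨fun T T' => ∃ u u', R u u' ∧ T = actVec P S u ∧ T' = actVec P S' u', ?_, ?_⟩
  · rintro T T' ⟨u, u', hr, rfl, rfl⟩
    refine ⟨?_, ?_, hR5 u u' hr⟩
    · intro x
      obtain ⟨x', hx', h⟩ := (hR4 u u' hr x).1
      exact ⟨x', hx', u ++ [x], u' ++ [x'], h,
        (actVec_append P S u [x]).symm, (actVec_append P S' u' [x']).symm⟩
    · intro x
      obtain ⟨x'', hx'', h⟩ := (hR4 u u' hr x).2
      exact ⟨x'', hx'', u ++ [x''], u' ++ [x], h,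
        (actVec_append P S u [x'']).symm, (actVec_append P S' u' [x]).symm⟩
  · obtain ⟨u', hu'⟩ := hR2 []
    have hlen : u' = [] := by
      have := eta_length hη (hR1 _ _ hu')
      exact (List.eq_nil_of_length_eq_zero this.symm)
    subst hlen
    exact ⟨[], [], hu', rfl, rfl⟩

lemma w_to_order (hη : IsSRM η) (h : ∃ R, IsWBisim P η S S' R) :
    ∀ m : ℕ, ∃ R, IsWBisimOfOrder P η S S' m R := by
  obtain ⟨R, hR1, hR2, hR3, hR4, hR5, hR6⟩ := h
  intro m
  refine ⟨fun u u' => R u u' ∧ u.length ≤ m ∧ u'.length ≤ m,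
    ?_, ?_, ?_, ?_, ?_, ?_, ?_⟩
  · rintro u u' ⟨h, -⟩; exact hR1 _ _ h
  · intro u hu
    obtain ⟨u', hu'⟩ := hR2 u
    refine ⟨u', hu', hu, ?_⟩
    have := eta_length hη (hR1 _ _ hu'); omega
  · intro u' hu'
    obtain ⟨u, hu⟩ := hR3 u'
    refine ⟨u, hu, ?_, hu'⟩
    have := eta_length hη (hR1 _ _ hu); omega
  · rintro u u' ⟨-, h1, h2⟩; exact ⟨h1, h2⟩
  · rintro u u' ⟨h, -, -⟩ hl hl' x
    obtain ⟨⟨x', hx', h1⟩, ⟨x'', hx'', h2⟩⟩ := hR4 u u' h x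
    exact ⟨⟨x', hx', h1, by simpa using hl, by simpa using hl'⟩,
           ⟨x'', hx'', h2, by simpa using hl, by simpa using hl'⟩⟩
  · rintro u u' ⟨h, -, -⟩; exact hR5 u u' h
  · rintro u u' x x' ⟨h, h1, h2⟩
    refine ⟨hR6 u u' x x' h, ?_, ?_⟩ <;> simp at h1 h2 <;> omega

lemma order_to_w [Fintype X] (hη : IsSRM η)
    (h : ∀ m : ℕ, ∃ R, IsWBisimOfOrder P η S S' m R) : ∃ R, IsWBisim P η S S' R := by
  classical
  choose Rm hRm using h
  let U : Ultrafilter ℕ := Filter.hyperfilter ℕ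
  have hge : ∀ L : ℕ, {m : ℕ | L ≤ m} ∈ U := by
    intro L
    refine Filter.mem_hyperfilter_of_finite_compl ?_
    have : {m : ℕ | L ≤ m}ᶜ = Set.Iio L := by ext m; simp [not_le]
    rw [this]; exact Set.finite_Iio L
  refine ⟨fun u u' => {m | Rm m u u'} ∈ U, ?_, ?_, ?_, ?_, ?_, ?_⟩
  · intro u u' h
    obtain ⟨m, hm⟩ := Ultrafilter.nonempty_of_mem h
    exact (hRm m).1 _ _ hm
  · intro u
    have h2 : {m : ℕ | u.length ≤ m} ⊆
        ⋃ u' ∈ {v : List X | v.length = u.length}, {m | Rm m u u'} := by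
      intro m hm
      obtain ⟨u', hu'⟩ := (hRm m).2.1 u hm
      have hlen : u'.length = u.length := (eta_length hη ((hRm m).1 _ _ hu')).symm
      exact Set.mem_biUnion hlen hu'
    obtain ⟨u', -, hu'⟩ := (Ultrafilter.finite_biUnion_mem_iff
      (List.finite_length_eq X u.length)).1 (Filter.mem_of_superset (hge u.length) h2)
    exact ⟨u', hu'⟩
  · intro u'
    have h2 : {m : ℕ | u'.length ≤ m} ⊆
        ⋃ u ∈ {v : List X | v.length = u'.length}, {m | Rm m u u'} := by
      intro m hm
      obtain ⟨u, hu⟩ := (hRm m).2.2.1 u' hm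
      have hlen : u.length = u'.length := eta_length hη ((hRm m).1 _ _ hu)
      exact Set.mem_biUnion hlen hu
    obtain ⟨u, -, hu⟩ := (Ultrafilter.finite_biUnion_mem_iff
      (List.finite_length_eq X u'.length)).1 (Filter.mem_of_superset (hge u'.length) h2)
    exact ⟨u, hu⟩
  · intro u u' h x
    have hA : {m | Rm m u u'} ∩ ({m | u.length + 1 ≤ m} ∩ {m | u'.length + 1 ≤ m}) ∈ U :=
      Filter.inter_mem h (Filter.inter_mem (hge (u.length + 1)) (hge (u'.length + 1)))
    constructor
    · have h2 : {m | Rm m u u'} ∩ ({m | u.length + 1 ≤ m} ∩ {m | u'.length + 1 ≤ m}) ⊆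
          ⋃ x' ∈ {x' : X | η [x] [x']}, {m | Rm m (u ++ [x]) (u' ++ [x'])} := by
        rintro m ⟨hm, hm1, hm2⟩
        obtain ⟨⟨x', hx', hr⟩, -⟩ := (hRm m).2.2.2.2.1 u u' hm hm1 hm2 x
        exact Set.mem_biUnion hx' hr
      obtain ⟨x', hx', hmem⟩ := (Ultrafilter.finite_biUnion_mem_iff
        (Set.toFinite _)).1 (Filter.mem_of_superset hA h2)
      exact ⟨x', hx', hmem⟩
    · have h2 : {m | Rm m u u'} ∩ ({m | u.length + 1 ≤ m} ∩ {m | u'.length + 1 ≤ m}) ⊆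
          ⋃ x'' ∈ {x'' : X | η [x''] [x]}, {m | Rm m (u ++ [x'']) (u' ++ [x])} := by
        rintro m ⟨hm, hm1, hm2⟩
        obtain ⟨-, ⟨x'', hx'', hr⟩⟩ := (hRm m).2.2.2.2.1 u u' hm hm1 hm2 x
        exact Set.mem_biUnion hx'' hr
      obtain ⟨x'', hx'', hmem⟩ := (Ultrafilter.finite_biUnion_mem_iff
        (Set.toFinite _)).1 (Filter.mem_of_superset hA h2)
      exact ⟨x'', hx'', hmem⟩
  · intro u u' h i
    obtain ⟨m, hm⟩ := Ultrafilter.nonempty_of_mem h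
    exact (hRm m).2.2.2.2.2.1 u u' hm i
  · intro u u' x x' h
    exact Filter.mem_of_superset h (fun m hm => (hRm m).2.2.2.2.2.2 u u' x x' hm)

end AuxBisim

/-- For deterministic rational row-vectors `S, S'` the following are equivalent:
(i) `S ∼ S'`; (ii) there is a w-`η`-bisimulation of order `∞` w.r.t. `(S, S')`;
(iii) for every `m ∈ ℕ` there is a w-`η`-bisimulation of order `m` w.r.t. `(S, S')`. -/
theorem sim_iff_wBisim_iff_wBisimOfOrder {V X : Type*} [Fintype X]
    (P : Set (V × X × List V)) (r : V → V → Prop) (hr : Equivalence r)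
    (hP : StrictDet P r) (η : List X → List X → Prop) (hη : IsSRM η)
    {n : ℕ} (S S' : Fin n → Language V)
    (hS : DetVec r S ∧ RatVec S) (hS' : DetVec r S' ∧ RatVec S') :
    (Sim P η S S' ↔ ∃ R, IsWBisim P η S S' R) ∧
    (Sim P η S S' ↔ ∀ m : ℕ, ∃ R, IsWBisimOfOrder P η S S' m R) := by
  constructor
  · exact ⟨fun h => sim_to_w hη h, fun h => w_to_sim hη h⟩
  · exact ⟨fun h => w_to_order hη (sim_to_w hη h),
      fun h => w_to_sim hη (order_to_w hη h)⟩
end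

section
/- Cancellation modulo bisimulation: for deterministic rational series S, S' (dimension 1) and a deterministic rational row-vector T of dimension λ, if S·T ∼ S'·T and T ≠ ∅^λ, then S ∼ S'. -/
section Aux

variable {V X : Type*} {P : Set (V × X × List V)} {r : V → V → Prop}

lemma mem_lq {S : Language V} {u w : List V} : w ∈ lq S u ↔ u ++ w ∈ S := Iff.rfl

lemma lq_nil (S : Language V) : lq S [] = S := by
  ext w; rfl

lemma lqVec_nil {n : ℕ} (A : Fin n → Language V) : lqVec A [] = A := by
  funext j; exact lq_nil _

lemma prefix_split {β γ w t : List V} (h : β ++ γ = w ++ t) (hlen : β.length ≤ w.length) :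
    ∃ δ, w = β ++ δ ∧ γ = δ ++ t := by
  have hpre : β <+: w :=
    List.prefix_of_prefix_length_le ⟨γ, h⟩ (List.prefix_append w t) hlen
  obtain ⟨δ, rfl⟩ := hpre
  refine ⟨δ, rfl, ?_⟩
  rw [List.append_assoc] at h
  exact List.append_cancel_left h

lemma gen_append {w₁ w₂ : List V} {u₁ u₂ : List X} (h₁ : Gen P w₁ u₁) (h₂ : Gen P w₂ u₂) :
    Gen P (w₁ ++ w₂) (u₁ ++ u₂) := by
  induction h₁ with
  | nil => simpa using h₂
  | cons hp _ ih =>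
    rw [List.cons_append, List.cons_append]
    exact Gen.cons hp (by rw [← List.append_assoc]; exact ih)

lemma gen_split {w : List V} {u : List X} (h : Gen P w u) :
    ∀ w₁ w₂, w = w₁ ++ w₂ → ∃ u₁ u₂, u = u₁ ++ u₂ ∧ Gen P w₁ u₁ ∧ Gen P w₂ u₂ := by
  induction h with
  | nil =>
    intro w₁ w₂ hw
    obtain ⟨h1, h2⟩ := List.append_eq_nil_iff.mp hw.symm
    exact ⟨[], [], rfl, h1 ▸ Gen.nil, h2 ▸ Gen.nil⟩
  | @cons v x β γ u hp hg ih =>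
    intro w₁ w₂ hw
    cases w₁ with
    | nil => exact ⟨[], x :: u, rfl, Gen.nil, by rw [List.nil_append] at hw; rw [← hw]; exact Gen.cons hp hg⟩
    | cons v₁ w₁' =>
      rw [List.cons_append] at hw
      injection hw with hv hγ
      subst hv
      obtain ⟨u₁, u₂, rfl, g1, g2⟩ := ih (β ++ w₁') w₂ (by rw [hγ, List.append_assoc])
      exact ⟨x :: u₁, u₂, rfl, Gen.cons hp g1, g2⟩

lemma gen_ne_nil {v : V} {γ : List V} {u : List X} (h : Gen P (v :: γ) u) : u ≠ [] := by
  cases h; simp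

lemma gen_exists (hred : ∀ v : V, ∃ u : List X, Gen P [v] u) (w : List V) :
    ∃ u : List X, Gen P w u := by
  induction w with
  | nil => exact ⟨[], Gen.nil⟩
  | cons v w ih =>
    obtain ⟨uv, hv⟩ := hred v
    obtain ⟨u, hu⟩ := ih
    exact ⟨uv ++ u, by simpa using gen_append hv hu⟩

lemma actLetter_zero (x : X) : actLetter P (0 : Language V) x = 0 := by
  ext w; simp only [actLetter, Set.mem_setOf_eq]
  constructor
  · rintro ⟨v, γ, β, h, -⟩; exact absurd h (Language.notMem_zero _)
  · intro h; exact absurd h (Language.notMem_zero _)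

lemma actLetter_one (x : X) : actLetter P (1 : Language V) x = 0 := by
  ext w; simp only [actLetter, Set.mem_setOf_eq]
  constructor
  · rintro ⟨v, γ, β, h, -⟩; rw [Language.mem_one] at h; exact absurd h (by simp)
  · intro h; exact absurd h (Language.notMem_zero _)

lemma act_cons (S : Language V) (x : X) (u : List X) :
    act P S (x :: u) = act P (actLetter P S x) u := rfl

lemma act_zero (u : List X) : act P (0 : Language V) u = 0 := by
  induction u with
  | nil => rfl
  | cons x u ih => rw [act_cons, actLetter_zero]; exact ih

lemma eps_mem_act {u : List X} : ∀ {S : Language V},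
    ([] ∈ act P S u ↔ ∃ w ∈ S, Gen P w u) := by
  induction u with
  | nil =>
    intro S
    constructor
    · intro h; exact ⟨[], h, Gen.nil⟩
    · rintro ⟨w, hw, hg⟩; cases hg; exact hw
  | cons x u ih =>
    intro S
    rw [act_cons, ih]
    constructor
    · rintro ⟨w', ⟨v, γ, β, hmem, hp, rfl⟩, hg⟩
      exact ⟨v :: γ, hmem, Gen.cons hp hg⟩
    · rintro ⟨w, hw, hg⟩
      cases hg with
      | cons hp hg' => exact ⟨_, ⟨_, _, _, hw, hp, rfl⟩, hg'⟩

lemma actLetter_mul {S : Language V} (hS : [] ∉ S) (T : Language V) (x : X) :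
    actLetter P (S * T) x = actLetter P S x * T := by
  ext w
  simp only [actLetter, Set.mem_setOf_eq, Language.mem_mul]
  constructor
  · rintro ⟨v, γ, β, hm, hp, rfl⟩
    obtain ⟨s, hs, t, ht, hst⟩ := Language.mem_mul.mp hm
    cases s with
    | nil => exact absurd hs hS
    | cons v' s₀ =>
      rw [List.cons_append] at hst
      injection hst with h1 h2
      exact ⟨β ++ s₀, ⟨v', s₀, β, hs, h1 ▸ hp, rfl⟩, t, ht, by rw [← h2]; exact List.append_assoc _ _ _⟩
  · rintro ⟨w₁, ⟨v, γ, β, hm, hp, rfl⟩, t, ht, rfl⟩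
    exact ⟨v, γ ++ t, β, Language.mem_mul.mpr ⟨v :: γ, hm, t, ht, rfl⟩, hp, by exact List.append_assoc _ _ _⟩

end Aux

section Prod

variable {V X : Type*} {P : Set (V × X × List V)} {r : V → V → Prop}

lemma mem_lqVec_prod {n : ℕ} (E : Fin n → V) (x : X) (u s : List V) (j : Fin n) :
    s ∈ lqVec (fun k => ({β | (E k, x, β) ∈ P} : Language V)) u j ↔ (E j, x, u ++ s) ∈ P :=
  Iff.rfl

lemma prod_det_pair (hr : Equivalence r) (hP : StrictDet P r) {v v' : V} (hvv : r v v')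
    (hne : v ≠ v') (x : X) :
    DetVec r (fun k : Fin 2 => ({β | (![v, v'] k, x, β) ∈ P} : Language V)) := by
  apply hP x 2 ![v, v']
  · intro a b hab
    fin_cases a <;> fin_cases b <;> simp_all
  · intro k k'
    fin_cases k <;> fin_cases k' <;>
      simp only [Matrix.cons_val_zero, Matrix.cons_val_one, Matrix.head_cons]
    · exact hr.refl v
    · exact hvv
    · exact hr.symm hvv
    · exact hr.refl v'

lemma prod_det_single (hr : Equivalence r) (hP : StrictDet P r) (v : V) (x : X) :
    DetVec r (fun k : Fin 1 => ({β | (![v] k, x, β) ∈ P} : Language V)) := by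
  apply hP x 1 ![v]
  · intro a b _; exact Subsingleton.elim a b
  · intro k k'; fin_cases k <;> fin_cases k' <;> simpa using hr.refl v

/-- If within an `r`-class a production RHS `u` for `x` is a prefix of another
RHS `u ++ s'`, then the variables and RHSs coincide. -/
lemma prod_eps (hr : Equivalence r) (hP : StrictDet P r) {v v' : V} (hvv : r v v') {x : X}
    {u s' : List V} (h1 : (v, x, u) ∈ P) (h2 : (v', x, u ++ s') ∈ P) :
    v = v' ∧ s' = [] := by
  rcases eq_or_ne v v' with rfl | hne
  · refine ⟨rfl, ?_⟩
    have hD := prod_det_single hr hP v x u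
    have hmem0 : ([] : List V) ∈ lqVec (fun k : Fin 1 => ({β | (![v] k, x, β) ∈ P} : Language V)) u 0 := by
      rw [mem_lqVec_prod]; simpa using h1
    have hmem1 : s' ∈ lqVec (fun k : Fin 1 => ({β | (![v] k, x, β) ∈ P} : Language V)) u 0 := by
      rw [mem_lqVec_prod]; simpa using h2
    rcases hD with hz | ⟨j0, hj0, -⟩ | hhead
    · rw [hz 0] at hmem0; exact absurd hmem0 (Language.notMem_zero _)
    · have hj00 : j0 = 0 := Subsingleton.elim _ _
      subst hj00
      rw [hj0, Language.mem_one] at hmem1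
      exact hmem1
    · obtain ⟨a, a', t, t', hcontra, -⟩ := hhead 0 0 [] s' hmem0 hmem1
      exact absurd hcontra (by simp)
  · exfalso
    have hD := prod_det_pair hr hP hvv hne x u
    have hmem0 : ([] : List V) ∈ lqVec (fun k : Fin 2 => ({β | (![v, v'] k, x, β) ∈ P} : Language V)) u 0 := by
      rw [mem_lqVec_prod]; simpa using h1
    have hmem1 : s' ∈ lqVec (fun k : Fin 2 => ({β | (![v, v'] k, x, β) ∈ P} : Language V)) u 1 := by
      rw [mem_lqVec_prod]; simpa [Matrix.cons_val_one, Matrix.head_cons] using h2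
    rcases hD with hz | ⟨j0, hj0, ho⟩ | hhead
    · rw [hz 0] at hmem0; exact Language.notMem_zero _ hmem0
    · rcases eq_or_ne j0 (0 : Fin 2) with rfl | h0
      · rw [ho 1 (by decide)] at hmem1; exact Language.notMem_zero _ hmem1
      · rw [ho 0 (Ne.symm h0)] at hmem0; exact Language.notMem_zero _ hmem0
    · obtain ⟨a, a', t, t', hcontra, -⟩ := hhead 0 1 [] s' hmem0 hmem1
      exact absurd hcontra (by simp)

/-- Within an `r`-class, two production RHSs for `x` extending a common prefix `u`
nontrivially have `r`-related next letters. -/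
lemma prod_head (hr : Equivalence r) (hP : StrictDet P r) {v v' : V} (hvv : r v v') {x : X}
    {u s s' : List V} (h1 : (v, x, u ++ s) ∈ P) (h2 : (v', x, u ++ s') ∈ P)
    (hs : s ≠ []) (hs' : s' ≠ []) :
    ∃ a a' t t', s = a :: t ∧ s' = a' :: t' ∧ r a a' := by
  rcases eq_or_ne v v' with rfl | hne
  · have hD := prod_det_single hr hP v x u
    have hmem0 : s ∈ lqVec (fun k : Fin 1 => ({β | (![v] k, x, β) ∈ P} : Language V)) u 0 := by
      rw [mem_lqVec_prod]; simpa using h1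
    have hmem1 : s' ∈ lqVec (fun k : Fin 1 => ({β | (![v] k, x, β) ∈ P} : Language V)) u 0 := by
      rw [mem_lqVec_prod]; simpa using h2
    rcases hD with hz | ⟨j0, hj0, -⟩ | hhead
    · rw [hz 0] at hmem0; exact absurd hmem0 (Language.notMem_zero _)
    · have hj00 : j0 = 0 := Subsingleton.elim _ _
      subst hj00
      rw [hj0, Language.mem_one] at hmem0
      exact absurd hmem0 hs
    · exact hhead 0 0 s s' hmem0 hmem1
  · have hD := prod_det_pair hr hP hvv hne x u
    have hmem0 : s ∈ lqVec (fun k : Fin 2 => ({β | (![v, v'] k, x, β) ∈ P} : Language V)) u 0 := by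
      rw [mem_lqVec_prod]; simpa using h1
    have hmem1 : s' ∈ lqVec (fun k : Fin 2 => ({β | (![v, v'] k, x, β) ∈ P} : Language V)) u 1 := by
      rw [mem_lqVec_prod]; simpa [Matrix.cons_val_one, Matrix.head_cons] using h2
    rcases hD with hz | ⟨j0, hj0, ho⟩ | hhead
    · rw [hz 0] at hmem0; exact absurd hmem0 (Language.notMem_zero _)
    · rcases eq_or_ne j0 (0 : Fin 2) with rfl | h0
      · rw [hj0, Language.mem_one] at hmem0; exact absurd hmem0 hs
      · rw [ho 0 (Ne.symm h0)] at hmem0; exact absurd hmem0 (Language.notMem_zero _)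
    · exact hhead 0 1 s s' hmem0 hmem1

/-- Corollary: comparable production RHSs within a class coincide. -/
lemma prod_prefix (hr : Equivalence r) (hP : StrictDet P r) {v v' : V} (hvv : r v v') {x : X}
    {β β' : List V} (h1 : (v, x, β) ∈ P) (h2 : (v', x, β') ∈ P) (hpre : β <+: β') :
    v = v' ∧ β = β' := by
  obtain ⟨δ, rfl⟩ := hpre
  obtain ⟨h3, h4⟩ := prod_eps hr hP hvv h1 h2
  exact ⟨h3, by rw [h4, List.append_nil]⟩

end Prod

section DetPreserve

variable {V X : Type*} {P : Set (V × X × List V)} {r : V → V → Prop}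

lemma lq_zero (w : List V) : lq (0 : Language V) w = 0 := by
  ext t
  exact Iff.intro (fun h => absurd h (Language.notMem_zero _))
    (fun h => absurd h (Language.notMem_zero _))

lemma mem_lqVec_actLetter {n : ℕ} {A : Fin n → Language V} {x : X} {w t : List V} {j : Fin n} :
    t ∈ lqVec (fun j => actLetter P (A j) x) w j ↔
      ∃ v γ β, v :: γ ∈ A j ∧ (v, x, β) ∈ P ∧ w ++ t = β ++ γ :=
  Iff.rfl

theorem detPreserveLetter (hr : Equivalence r) (hP : StrictDet P r) {n : ℕ}
    {A : Fin n → Language V} (hA : DetVec r A) (x : X) :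
    DetVec r (fun j => actLetter P (A j) x) := by
  intro w
  have h0 := hA []
  rw [lqVec_nil] at h0
  rcases h0 with hz | ⟨j0, hj0, ho⟩ | hhead
  · left; intro j
    show lq (actLetter P (A j) x) w = 0
    rw [hz j, actLetter_zero, lq_zero]
  · left; intro j
    have hB : actLetter P (A j) x = 0 := by
      rcases eq_or_ne j j0 with rfl | hj
      · rw [hj0, actLetter_one]
      · rw [ho j hj, actLetter_zero]
    show lq (actLetter P (A j) x) w = 0
    rw [hB, lq_zero]
  · -- main case: all words of `A` are nonempty with r-related heads
    have hrel : ∀ {j j' : Fin n} {v v' : V} {γ γ' : List V},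
        v :: γ ∈ A j → v' :: γ' ∈ A j' → r v v' := by
      intro j j' v v' γ γ' h1 h2
      obtain ⟨a, a', t, t', he1, he2, hra⟩ := hhead j j' _ _ h1 h2
      injection he1 with e1 _
      injection he2 with e2 _
      rw [e1, e2]; exact hra
    by_cases hε : ∃ j0, [] ∈ lq (actLetter P (A j0) x) w
    · -- some component contains ε: the residual vector is a unit vector
      obtain ⟨j0, hj0mem⟩ := hε
      obtain ⟨v₀, γ₀, β₀, hA0, hP0, heq0⟩ :=
        (mem_lqVec_actLetter (A := A) (x := x) (w := w) (t := []) (j := j0)).mp hj0mem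
      rw [List.append_nil] at heq0
      -- the residual of A at v₀::γ₀ is the unit at j0
      have hARmem : ([] : List V) ∈ lqVec A (v₀ :: γ₀) j0 := by
        show (v₀ :: γ₀) ++ [] ∈ A j0
        rw [List.append_nil]; exact hA0
      have hunit : ∀ j t, (v₀ :: γ₀) ++ t ∈ A j → j = j0 ∧ t = [] := by
        rcases hA (v₀ :: γ₀) with hz | ⟨j1, hj1, ho1⟩ | hh
        · rw [hz j0] at hARmem; exact absurd hARmem (Language.notMem_zero _)
        · have hj01 : j0 = j1 := by
            by_contra hne; rw [ho1 j0 hne] at hARmem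
            exact Language.notMem_zero _ hARmem
          subst hj01
          intro j t ht
          have ht' : t ∈ lqVec A (v₀ :: γ₀) j := ht
          rcases eq_or_ne j j0 with rfl | hne
          · rw [hj1, Language.mem_one] at ht'; exact ⟨rfl, ht'⟩
          · rw [ho1 j hne] at ht'; exact absurd ht' (Language.notMem_zero _)
        · obtain ⟨a, a', t, t', hc, -⟩ := hh j0 j0 [] [] hARmem hARmem
          exact absurd hc (by simp)
      have hall : ∀ j t, t ∈ lq (actLetter P (A j) x) w → j = j0 ∧ t = [] := by
        intro j t ht
        obtain ⟨v, γ, β, hAv, hPv, heq⟩ :=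
          (mem_lqVec_actLetter (A := A) (x := x) (w := w) (t := t) (j := j)).mp ht
        have hrv : r v v₀ := hrel hAv hA0
        rcases le_or_gt β.length w.length with hle | hlt
        · obtain ⟨δ, hw1, hγ⟩ := prefix_split heq.symm hle
          have hpre : β <+: w := ⟨δ, hw1.symm⟩
          have hpre0 : β₀ <+: w := ⟨γ₀, heq0.symm⟩
          have hvβ : v = v₀ ∧ β = β₀ := by
            rcases List.prefix_or_prefix_of_prefix hpre hpre0 with hp | hp
            · exact prod_prefix hr hP hrv hPv hP0 hp
            · obtain ⟨e1, e2⟩ := prod_prefix hr hP (hr.symm hrv) hP0 hPv hp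
              exact ⟨e1.symm, e2.symm⟩
          obtain ⟨e1, e2⟩ := hvβ
          subst e1; subst e2
          have hδ : δ = γ₀ := by
            apply List.append_cancel_left (as := β)
            rw [← hw1]; exact heq0
          apply hunit j t
          have hv : v :: γ = (v :: γ₀) ++ t := by
            rw [hγ, hδ]; rfl
          exact hv ▸ hAv
        · exfalso
          obtain ⟨δ, hβ1, -⟩ := prefix_split heq hlt.le
          have hpre0 : β₀ <+: w := ⟨γ₀, heq0.symm⟩
          have hp : β₀ <+: β := hpre0.trans ⟨δ, hβ1.symm⟩
          obtain ⟨-, e2⟩ := prod_prefix hr hP (hr.symm hrv) hP0 hPv hp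
          have hl0 := congrArg List.length heq0
          rw [List.length_append] at hl0
          rw [← e2] at hlt
          omega
      refine Or.inr (Or.inl ⟨j0, ?_, ?_⟩)
      · ext t
        rw [Language.mem_one]
        constructor
        · intro ht; exact (hall j0 t ht).2
        · rintro rfl; exact hj0mem
      · intro j hj
        ext t
        constructor
        · intro ht; exact absurd (hall j t ht).1 hj
        · intro ht; exact absurd ht (Language.notMem_zero _)
    · -- no component contains ε: all heads are r-related
      right; right
      intro j j' w' w'' hw' hw''
      cases w' with
      | nil => exact absurd ⟨j, hw'⟩ hε
      | cons a t =>
      cases w'' with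
      | nil => exact absurd ⟨j', hw''⟩ hε
      | cons a' t' =>
      refine ⟨a, a', t, t', rfl, rfl, ?_⟩
      obtain ⟨v, γ, β, hAv, hPv, heq⟩ :=
        (mem_lqVec_actLetter (A := A) (x := x) (w := w) (t := a :: t) (j := j)).mp hw'
      obtain ⟨v', γ', β', hAv', hPv', heq'⟩ :=
        (mem_lqVec_actLetter (A := A) (x := x) (w := w) (t := a' :: t') (j := j')).mp hw''
      have hrv : r v v' := hrel hAv hAv'
      -- mixed case is impossible
      have mixed : ∀ (v₁ v₂ : V) (β₁ β₂ γ₁ γ₂ t₁ t₂ : List V), r v₁ v₂ →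
          (v₁, x, β₁) ∈ P → (v₂, x, β₂) ∈ P →
          β₁ ++ γ₁ = w ++ t₁ → β₂ ++ γ₂ = w ++ t₂ →
          β₁.length ≤ w.length → w.length < β₂.length → False := by
        intro v₁ v₂ β₁ β₂ γ₁ γ₂ t₁ t₂ hr12 hp1 hp2 he1 he2 hle hlt
        obtain ⟨δ, hw1, -⟩ := prefix_split he1 hle
        obtain ⟨δ', hβ2, -⟩ := prefix_split he2.symm hlt.le
        have hp : β₁ <+: β₂ := by
          refine ⟨δ ++ δ', ?_⟩
          rw [hβ2, hw1, List.append_assoc]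
        obtain ⟨-, e2⟩ := prod_prefix hr hP hr12 hp1 hp2 hp
        rw [← e2] at hlt
        omega
      rcases le_or_gt β.length w.length with hle | hlt <;>
        rcases le_or_gt β'.length w.length with hle' | hlt'
      · -- both RHSs are prefixes of w: forced equal, compare inside A
        obtain ⟨δ, hw1, hγ⟩ := prefix_split heq.symm hle
        obtain ⟨δ', hw2, hγ'⟩ := prefix_split heq'.symm hle'
        have hvβ : v = v' ∧ β = β' := by
          rcases List.prefix_or_prefix_of_prefix (⟨δ, hw1.symm⟩ : β <+: w)
              (⟨δ', hw2.symm⟩ : β' <+: w) with hp | hp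
          · exact prod_prefix hr hP hrv hPv hPv' hp
          · obtain ⟨e1, e2⟩ := prod_prefix hr hP (hr.symm hrv) hPv' hPv hp
            exact ⟨e1.symm, e2.symm⟩
        obtain ⟨e1, e2⟩ := hvβ
        subst e1; subst e2
        have hδδ : δ = δ' := by
          apply List.append_cancel_left (as := β)
          rw [← hw1, ← hw2]
        subst hδδ
        have m1 : (a :: t) ∈ lqVec A (v :: δ) j := by
          show (v :: δ) ++ (a :: t) ∈ A j
          have hv1 : v :: γ = (v :: δ) ++ (a :: t) := by rw [hγ]; rfl
          exact hv1 ▸ hAv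
        have m2 : (a' :: t') ∈ lqVec A (v :: δ) j' := by
          show (v :: δ) ++ (a' :: t') ∈ A j'
          have hv2 : v :: γ' = (v :: δ) ++ (a' :: t') := by rw [hγ']; rfl
          exact hv2 ▸ hAv'
        rcases hA (v :: δ) with hz | ⟨j1, hj1, ho1⟩ | hh
        · rw [hz j] at m1; exact absurd m1 (Language.notMem_zero _)
        · rcases eq_or_ne j j1 with rfl | hne
          · rw [hj1, Language.mem_one] at m1; exact absurd m1 (by simp)
          · rw [ho1 j hne] at m1; exact absurd m1 (Language.notMem_zero _)
        · obtain ⟨b, b', s, s', hb, hb', hrb⟩ := hh j j' _ _ m1 m2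
          injection hb with eb _
          injection hb' with eb' _
          rw [eb, eb']; exact hrb
      · exact (mixed v v' β β' γ γ' (a :: t) (a' :: t') hrv
          hPv hPv' heq.symm heq'.symm hle hlt').elim
      · exact (mixed v' v β' β γ' γ (a' :: t') (a :: t) (hr.symm hrv)
          hPv' hPv heq'.symm heq.symm hle' hlt).elim
      · -- both RHSs extend w: heads come from the productions
        obtain ⟨δ, hβ1, hta⟩ := prefix_split heq hlt.le
        obtain ⟨δ', hβ2, hta'⟩ := prefix_split heq' hlt'.le
        have hδ : δ ≠ [] := by
          intro h; rw [h, List.append_nil] at hβ1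
          rw [hβ1] at hlt; omega
        have hδ' : δ' ≠ [] := by
          intro h; rw [h, List.append_nil] at hβ2
          rw [hβ2] at hlt'; omega
        obtain ⟨b, b', s, s', hb, hb', hrb⟩ :=
          prod_head hr hP hrv (hβ1 ▸ hPv) (hβ2 ▸ hPv') hδ hδ'
        rw [hb] at hta
        rw [hb'] at hta'
        injection hta with ea _
        injection hta' with ea' _
        rw [ea, ea']; exact hrb
  
end DetPreserve

section Bisim

variable {V X : Type*} {P : Set (V × X × List V)} {r : V → V → Prop}
  {η : List X → List X → Prop}

lemma actVec_cons {n : ℕ} (A : Fin n → Language V) (x : X) (u : List X) :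
    actVec P A (x :: u) = actVec P (fun j => actLetter P (A j) x) u := rfl

lemma actVec_single {n : ℕ} (A : Fin n → Language V) (x : X) :
    actVec P A [x] = fun j => actLetter P (A j) x := rfl

theorem detPreserveAct (hr : Equivalence r) (hP : StrictDet P r) {n : ℕ} (u : List X) :
    ∀ {A : Fin n → Language V}, DetVec r A → DetVec r (actVec P A u) := by
  induction u with
  | nil => intro A hA; exact hA
  | cons x u ih =>
    intro A hA
    rw [actVec_cons]
    exact ih (detPreserveLetter hr hP hA x)

lemma eps_detVec {n : ℕ} {A : Fin n → Language V} (hA : DetVec r A) {j : Fin n}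
    (h : [] ∈ A j) : A = unitVec j := by
  have h0 := hA []
  rw [lqVec_nil] at h0
  rcases h0 with hz | ⟨j1, hj1, ho⟩ | hh
  · rw [hz j] at h; exact absurd h (Language.notMem_zero _)
  · have hjj : j = j1 := by
      by_contra hne; rw [ho j hne] at h; exact Language.notMem_zero _ h
    subst hjj
    funext j'
    rcases eq_or_ne j' j with rfl | hne
    · rw [hj1]; simp [unitVec]
    · rw [ho j' hne]; simp [unitVec, hne]
  · obtain ⟨a, a', t, t', hc, -⟩ := hh j j [] [] h h
    exact absurd hc (by simp)

lemma nil_mem_unitVec {n : ℕ} (j : Fin n) : [] ∈ unitVec (V := V) j j := by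
  simp [unitVec]

/-- Along a bisimulation, if the left side reaches a component containing `ε`
in `k` steps, so does the right side (in the same number of steps). -/
lemma bisim_reach (hr : Equivalence r) (hP : StrictDet P r) {n : ℕ}
    {R₀ : (Fin n → Language V) → (Fin n → Language V) → Prop}
    (hR₀ : IsSigmaBisim P η R₀) (u : List X) :
    ∀ {A A' : Fin n → Language V}, R₀ A A' → DetVec r A →
      ∀ j, [] ∈ actVec P A u j →
        ∃ u' j', u'.length = u.length ∧ [] ∈ actVec P A' u' j' := by
  induction u with
  | nil =>
    intro A A' hAA hA j hmem
    have hAu : A = unitVec j := eps_detVec hA hmem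
    have hA'u : A' = unitVec j := ((hR₀ A A' hAA).2.2 j).mp hAu
    exact ⟨[], j, rfl, by rw [show actVec P A' [] = A' from rfl, hA'u]; exact nil_mem_unitVec j⟩
  | cons x u ih =>
    intro A A' hAA hA j hmem
    obtain ⟨x', hx', hR'⟩ := (hR₀ A A' hAA).1 x
    rw [actVec_cons] at hmem
    have hdet : DetVec r (fun j => actLetter P (A j) x) := detPreserveLetter hr hP hA x
    obtain ⟨u₁, j', hlen, hmem'⟩ := ih (by rw [actVec_single] at hR'; exact hR') hdet j hmem
    refine ⟨x' :: u₁, j', by simp [hlen], ?_⟩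
    rw [actVec_cons]
    exact hmem'

lemma eta_letter (hη : IsSRM η) (x : X) : ∃ x', η [x] [x'] := by
  obtain ⟨u', hu'⟩ := hη.2.2.1 [x]
  obtain ⟨l, hl1, hl2, hl3⟩ := hη.2.2.2.2 _ _ hu'
  cases l with
  | nil => simp at hl1
  | cons p l' =>
    cases l' with
    | nil =>
      simp at hl1 hl2
      refine ⟨p.2, ?_⟩
      rw [hl1]
      exact hl3 p (by simp)
    | cons q l'' => simp at hl1

lemma eta_letter' (hη : IsSRM η) (x : X) : ∃ x'', η [x''] [x] := by
  obtain ⟨u, hu⟩ := hη.2.2.2.1 [x]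
  obtain ⟨l, hl1, hl2, hl3⟩ := hη.2.2.2.2 _ _ hu
  cases l with
  | nil => simp at hl2
  | cons p l' =>
    cases l' with
    | nil =>
      simp at hl1 hl2
      refine ⟨p.1, ?_⟩
      rw [hl2]
      exact hl3 p (by simp)
    | cons q l'' => simp at hl2

/-- The mirror-image reachability transfer, using the second bisimulation clause. -/
lemma bisim_reach' (hr : Equivalence r) (hP : StrictDet P r) {n : ℕ}
    {R₀ : (Fin n → Language V) → (Fin n → Language V) → Prop}
    (hR₀ : IsSigmaBisim P η R₀) (u : List X) :
    ∀ {A A' : Fin n → Language V}, R₀ A A' → DetVec r A' →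
      ∀ j, [] ∈ actVec P A' u j →
        ∃ u' j', u'.length = u.length ∧ [] ∈ actVec P A u' j' := by
  induction u with
  | nil =>
    intro A A' hAA hA' j hmem
    have hA'u : A' = unitVec j := eps_detVec hA' hmem
    have hAu : A = unitVec j := ((hR₀ A A' hAA).2.2 j).mpr hA'u
    exact ⟨[], j, rfl, by rw [show actVec P A [] = A from rfl, hAu]; exact nil_mem_unitVec j⟩
  | cons x u ih =>
    intro A A' hAA hA' j hmem
    obtain ⟨x'', hx'', hR'⟩ := (hR₀ A A' hAA).2.1 x
    rw [actVec_cons] at hmem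
    have hdet : DetVec r (fun j => actLetter P (A' j) x) := detPreserveLetter hr hP hA' x
    obtain ⟨u₁, j', hlen, hmem'⟩ := ih (by rw [actVec_single, actVec_single] at hR'; exact hR') hdet j hmem
    refine ⟨x'' :: u₁, j', by simp [hlen], ?_⟩
    rw [actVec_cons]
    exact hmem'

lemma sim_zero (hη : IsSRM η) {n : ℕ} :
    Sim P η (fun _ : Fin n => (0 : Language V)) (fun _ : Fin n => (0 : Language V)) := by
  refine ⟨fun U U' => U = (fun _ => 0) ∧ U' = (fun _ => 0), fun U U' hUU => ?_, rfl, rfl⟩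
  obtain ⟨h1, h2⟩ := hUU
  subst h1; subst h2
  have hact : ∀ y : X, actVec P (fun _ : Fin n => (0 : Language V)) [y] = fun _ => 0 := by
    intro y; funext j
    rw [actVec_single]
    exact actLetter_zero y
  refine ⟨fun x => ?_, fun x => ?_, fun i => Iff.rfl⟩
  · obtain ⟨x', hx'⟩ := eta_letter hη x
    exact ⟨x', hx', hact x, hact x'⟩
  · obtain ⟨x'', hx''⟩ := eta_letter' hη x
    exact ⟨x'', hx'', hact x'', hact x⟩

end Bisim

section Key

variable {V X : Type*} {P : Set (V × X × List V)} {r : V → V → Prop}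
  {η : List X → List X → Prop}

lemma exists_reach (hred : ∀ v : V, ∃ u : List X, Gen P [v] u) {lam : ℕ}
    {T : Fin lam → Language V} (hT0 : T ≠ fun _ => (0 : Language V)) :
    ∃ k : ℕ, ∃ (u : List X) (j : Fin lam), u.length = k ∧ [] ∈ actVec P T u j := by
  have hj : ∃ j, T j ≠ 0 := by
    by_contra hc; push_neg at hc; exact hT0 (funext hc)
  obtain ⟨j, hj⟩ := hj
  have ht : ∃ t, t ∈ T j := by
    by_contra hc; push_neg at hc
    exact hj (Set.eq_empty_iff_forall_notMem.mpr hc)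
  obtain ⟨t, ht⟩ := ht
  obtain ⟨u, hu⟩ := gen_exists hred t
  exact ⟨u.length, u, j, rfl, eps_mem_act.mpr ⟨t, ht, hu⟩⟩

lemma key_step (hred : ∀ v : V, ∃ u : List X, Gen P [v] u) {lam : ℕ}
    {T : Fin lam → Language V} (hT0 : T ≠ fun _ => (0 : Language V)) {S' : Language V}
    (hS' : [] ∉ S')
    (htrans : ∀ (u : List X) (j : Fin lam), [] ∈ actVec P T u j →
      ∃ u' j', u'.length = u.length ∧ [] ∈ actVec P (fun j => S' * T j) u' j') :
    False := by
  classical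
  have hQ : ∃ k : ℕ, ∃ (u : List X) (j : Fin lam), u.length = k ∧ [] ∈ actVec P T u j :=
    exists_reach hred hT0
  obtain ⟨u, j, hlen, hmem⟩ := Nat.find_spec hQ
  obtain ⟨u', j', hlen', hmem'⟩ := htrans u j hmem
  obtain ⟨w, hw, hg⟩ := eps_mem_act.mp hmem'
  obtain ⟨s, hs, t, ht, hst⟩ := Language.mem_mul.mp hw
  obtain ⟨u₁, u₂, hu12, g1, g2⟩ := gen_split hg s t hst.symm
  have hs0 : s ≠ [] := fun hc => hS' (hc ▸ hs)
  have hu₁ : u₁ ≠ [] := by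
    cases s with
    | nil => exact absurd rfl hs0
    | cons v s₀ => exact gen_ne_nil g1
  have hQ2 : ∃ (u : List X) (j : Fin lam), u.length = u₂.length ∧ [] ∈ actVec P T u j :=
    ⟨u₂, j', rfl, eps_mem_act.mpr ⟨t, ht, g2⟩⟩
  have hlt : u₂.length < Nat.find hQ := by
    have h1 := congrArg List.length hu12
    rw [List.length_append] at h1
    have h2 : 0 < u₁.length := List.length_pos_iff.mpr hu₁
    omega
  exact Nat.find_min hQ hlt hQ2

/-- If `T ∼ S'·T` with `T` a nonzero deterministic vector, then `ε ∈ S'`. -/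
lemma key (hr : Equivalence r) (hP : StrictDet P r)
    (hred : ∀ v : V, ∃ u : List X, Gen P [v] u) {lam : ℕ} {T : Fin lam → Language V}
    (hT : DetVec r T) (hT0 : T ≠ fun _ => (0 : Language V)) {S' : Language V}
    (hsim : Sim P η T (fun j => S' * T j)) : [] ∈ S' := by
  by_contra hS'
  obtain ⟨R₀, hR₀, h₀⟩ := hsim
  exact key_step hred hT0 hS' (fun u j hm => bisim_reach hr hP hR₀ u h₀ hT j hm)

/-- If `S'·T ∼ T` with `T` a nonzero deterministic vector, then `ε ∈ S'`. -/
lemma key' (hr : Equivalence r) (hP : StrictDet P r)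
    (hred : ∀ v : V, ∃ u : List X, Gen P [v] u) {lam : ℕ} {T : Fin lam → Language V}
    (hT : DetVec r T) (hT0 : T ≠ fun _ => (0 : Language V)) {S' : Language V}
    (hsim : Sim P η (fun j => S' * T j) T) : [] ∈ S' := by
  by_contra hS'
  obtain ⟨R₀, hR₀, h₀⟩ := hsim
  exact key_step hred hT0 hS' (fun u j hm => bisim_reach' hr hP hR₀ u h₀ hT j hm)

lemma det_eps_one {A : Fin 1 → Language V} (hA : DetVec r A) (h : [] ∈ A 0) : A 0 = 1 := by
  have hu := eps_detVec hA h
  rw [hu]; simp [unitVec]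

lemma det_scalar_cases {A : Fin 1 → Language V} (hA : DetVec r A) :
    A 0 = 1 ∨ [] ∉ A 0 := by
  by_cases h : [] ∈ A 0
  · exact Or.inl (det_eps_one hA h)
  · exact Or.inr h

lemma unit1_iff {A : Fin 1 → Language V} : A = unitVec 0 ↔ A 0 = 1 := by
  constructor
  · intro h; rw [h]; simp [unitVec]
  · intro h; funext j
    have hj : j = 0 := Subsingleton.elim _ _
    subst hj
    rw [h]; simp [unitVec]

end Key

/-- Cancellation modulo bisimulation: for deterministic rational series `S, S'` and a
deterministic rational row-vector `T ≠ ∅^λ` over the (proper, reduced) grammar,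
`S·T ∼ S'·T` implies `S ∼ S'`. -/
theorem sim_cancel {V X : Type*} (P : Set (V × X × List V))
    (r : V → V → Prop) (hr : Equivalence r) (hP : StrictDet P r)
    (η : List X → List X → Prop) (hη : IsSRM η)
    -- the grammar is reduced: every variable generates some terminal word
    (hred : ∀ v : V, ∃ u : List X, Gen P [v] u)
    {lam : ℕ} (S S' : Language V) (T : Fin lam → Language V)
    (hS : Det r S ∧ RatSer S) (hS' : Det r S' ∧ RatSer S')
    (hT : DetVec r T ∧ RatVec T)
    (hT0 : T ≠ fun _ => (0 : Language V))
    (h : Sim P η (fun j => S * T j) (fun j => S' * T j)) :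
    Sim P η (fun _ : Fin 1 => S) (fun _ : Fin 1 => S') := by
  obtain ⟨hSdet, -⟩ := hS
  obtain ⟨hS'det, -⟩ := hS'
  obtain ⟨hTdet, -⟩ := hT
  classical
  -- the cancellation bisimulation: pairs of deterministic scalars whose products
  -- with `T` are bisimilar
  refine ⟨fun A A' => DetVec r A ∧ DetVec r A' ∧
      Sim P η (fun j => A 0 * T j) (fun j => A' 0 * T j), ?_, hSdet, hS'det, h⟩
  rintro A A' ⟨hA, hA', hsim⟩
  -- if `A 0 = 1`, so is `A' 0`, and conversely
  have h11 : [] ∈ A 0 → A' 0 = 1 := by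
    intro h1
    have hA0 : A 0 = 1 := det_eps_one hA h1
    have hTe : (fun j => A 0 * T j) = T := by
      funext j; rw [hA0, one_mul]
    rw [hTe] at hsim
    exact det_eps_one hA' (key hr hP hred hTdet hT0 hsim)
  have h11' : [] ∈ A' 0 → A 0 = 1 := by
    intro h1
    have hA0 : A' 0 = 1 := det_eps_one hA' h1
    have hTe : (fun j => A' 0 * T j) = T := by
      funext j; rw [hA0, one_mul]
    rw [hTe] at hsim
    exact det_eps_one hA (key' hr hP hred hTdet hT0 hsim)
  -- the "both units" continuation
  have hzero : ∀ (B : Fin 1 → Language V) (y : X), B 0 = 1 →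
      (fun j => actVec P B [y] 0 * T j) = fun _ => (0 : Language V) := by
    intro B y hB
    funext j
    rw [actVec_single]
    show actLetter P (B 0) y * T j = 0
    rw [hB, actLetter_one, zero_mul]
  -- product commutes with the action for `ε`-free scalars
  have hcomm : ∀ (B : Fin 1 → Language V) (y : X), [] ∉ B 0 →
      actVec P (fun j => B 0 * T j) [y] = fun j => actVec P B [y] 0 * T j := by
    intro B y hB
    funext j
    rw [actVec_single, actVec_single]
    exact actLetter_mul hB (T j) y
  refine ⟨?_, ?_, ?_⟩
  · -- clause 1
    intro x
    by_cases h1 : [] ∈ A 0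
    · obtain ⟨x', hx'⟩ := eta_letter hη x
      refine ⟨x', hx', detPreserveAct hr hP [x] hA, detPreserveAct hr hP [x'] hA', ?_⟩
      rw [hzero A x (det_eps_one hA h1), hzero A' x' (h11 h1)]
      exact sim_zero hη
    · by_cases h2 : [] ∈ A' 0
      · exact absurd (by rw [h11' h2]; exact Language.nil_mem_one) h1
      · obtain ⟨R₀, hR₀, h₀⟩ := hsim
        obtain ⟨x', hx', hR'⟩ := (hR₀ _ _ h₀).1 x
        rw [hcomm A x h1, hcomm A' x' h2] at hR'
        exact ⟨x', hx', detPreserveAct hr hP [x] hA, detPreserveAct hr hP [x'] hA',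
          ⟨R₀, hR₀, hR'⟩⟩
  · -- clause 2
    intro x
    by_cases h2 : [] ∈ A' 0
    · obtain ⟨x'', hx''⟩ := eta_letter' hη x
      refine ⟨x'', hx'', detPreserveAct hr hP [x''] hA, detPreserveAct hr hP [x] hA', ?_⟩
      rw [hzero A x'' (h11' h2), hzero A' x (det_eps_one hA' h2)]
      exact sim_zero hη
    · by_cases h1 : [] ∈ A 0
      · exact absurd (by rw [h11 h1]; exact Language.nil_mem_one) h2
      · obtain ⟨R₀, hR₀, h₀⟩ := hsim
        obtain ⟨x'', hx'', hR'⟩ := (hR₀ _ _ h₀).2.1 x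
        rw [hcomm A x'' h1, hcomm A' x h2] at hR'
        exact ⟨x'', hx'', detPreserveAct hr hP [x''] hA, detPreserveAct hr hP [x] hA',
          ⟨R₀, hR₀, hR'⟩⟩
  · -- clause 3
    intro i
    have hi : i = 0 := Subsingleton.elim _ _
    subst hi
    rw [unit1_iff, unit1_iff]
    constructor
    · intro h1; exact h11 (h1 ▸ Language.nil_mem_one)
    · intro h1; exact h11' (h1 ▸ Language.nil_mem_one)
end
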